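/- arXiv:2002.08056 — 2 statements merged into one kernel-verified Lean document; each statement's English description precedes it below -/
import Mathlib

section
/- Let H ∈ ℝ^{d×d} be symmetric positive semi-definite, and let l_1, …, l_d ≥ 0 be such that diag(l_1, …, l_d) − H is positive semi-definite. Then ‖H‖_{∞,1} := max_{‖x‖_∞ ≤ 1} ‖H x‖_1 ≤ Σ_{i=1}^d l_i. In particular L_∞(H) ≤ L_sep(H), where L_sep(H) is the infimum of Σ_i l_i over all nonnegative l_1, …, l_d with H ⪯ diag(l_1, …, l_d). -/
open scoped BigOperators

/-- The matrix norm `‖H‖_{∞,1} = max_{‖x‖_∞ ≤ 1} ‖H x‖_1`. -/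
noncomputable def normInftyOne {d : ℕ} (H : Matrix (Fin d) (Fin d) ℝ) : ℝ :=
  sSup ((fun x : Fin d → ℝ => ∑ i, |H.mulVec x i|) '' {x | ∀ i, |x i| ≤ 1})

/-- `L_sep(H)` is the infimum of `∑ i, l i` over nonnegative `l` with
`H ⪯ diag l`, i.e. with `diag l - H` positive semi-definite. -/
noncomputable def Lsep {d : ℕ} (H : Matrix (Fin d) (Fin d) ℝ) : ℝ :=
  sInf {s : ℝ | ∃ l : Fin d → ℝ, (∀ i, 0 ≤ l i) ∧
    (Matrix.diagonal l - H).PosSemidef ∧ s = ∑ i, l i}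

/-!
For `‖x‖_∞ ≤ 1` let `s` be the sign vector of `H x`, so that `‖H x‖_1 = sᵀ H x`. Since `H ⪰ 0`,
`2 sᵀ H x ≤ sᵀ H s + xᵀ H x`, and each quadratic form is at most `∑ lᵢ yᵢ² ≤ ∑ lᵢ`
because `H ⪯ diag l` and `|yᵢ| ≤ 1`.
-/

namespace Matrix

variable {n R : Type*} [Fintype n] [CommRing R]

theorem IsSymm.dotProduct_mulVec_comm {H : Matrix n n R} (hH : H.IsSymm) (x y : n → R) :
    x ⬝ᵥ H *ᵥ y = y ⬝ᵥ H *ᵥ x := by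
  rw [dotProduct_mulVec, ← mulVec_transpose, hH.eq, dotProduct_comm]

theorem dotProduct_diagonal_mulVec_self [DecidableEq n] (l y : n → R) :
    y ⬝ᵥ diagonal l *ᵥ y = ∑ i, l i * y i ^ 2 := by
  simp only [dotProduct, mulVec_diagonal]
  exact Finset.sum_congr rfl fun i _ => by ring

variable [LinearOrder R] [IsStrictOrderedRing R] [StarRing R] [TrivialStar R]

theorem PosSemidef.two_mul_dotProduct_mulVec_le {H : Matrix n n R} (hH : H.PosSemidef)
    (x y : n → R) : 2 * (x ⬝ᵥ H *ᵥ y) ≤ x ⬝ᵥ H *ᵥ x + y ⬝ᵥ H *ᵥ y := by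
  have hsymm := (isHermitian_iff_isSymm.mp hH.1).dotProduct_mulVec_comm x y
  have h := hH.dotProduct_mulVec_nonneg (x - y)
  simp only [mulVec_sub, sub_dotProduct, dotProduct_sub, star_trivial] at h
  linarith

theorem dotProduct_mulVec_self_le_sum_of_posSemidef_diagonal_sub [DecidableEq n]
    {H : Matrix n n R} {l : n → R} (hl : ∀ i, 0 ≤ l i) (hdom : (diagonal l - H).PosSemidef)
    {y : n → R} (hy : ∀ i, |y i| ≤ 1) : y ⬝ᵥ H *ᵥ y ≤ ∑ i, l i := by
  have hdiag : y ⬝ᵥ H *ᵥ y ≤ y ⬝ᵥ diagonal l *ᵥ y := by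
    simpa [sub_mulVec] using hdom.dotProduct_mulVec_nonneg y
  calc y ⬝ᵥ H *ᵥ y ≤ ∑ i, l i * y i ^ 2 := dotProduct_diagonal_mulVec_self l y ▸ hdiag
    _ ≤ ∑ i, l i := Finset.sum_le_sum fun i _ =>
      mul_le_of_le_one_right (hl i) (sq_le_one_iff_abs_le_one _ |>.mpr (hy i))

theorem sum_abs_mulVec_le_sum_of_posSemidef_diagonal_sub [DecidableEq n]
    {H : Matrix n n R} (hH : H.PosSemidef) {l : n → R} (hl : ∀ i, 0 ≤ l i)
    (hdom : (diagonal l - H).PosSemidef) {x : n → R} (hx : ∀ i, |x i| ≤ 1) :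
    ∑ i, |(H *ᵥ x) i| ≤ ∑ i, l i := by
  set s : n → R := fun i => (SignType.sign ((H *ᵥ x) i) : R)
  have hs : ∀ i, |s i| ≤ 1 := fun i => by
    rcases lt_trichotomy ((H *ᵥ x) i) 0 with h | h | h <;> simp [s, h]
  have habs : ∑ i, |(H *ᵥ x) i| = s ⬝ᵥ H *ᵥ x := by
    simp only [dotProduct, s, sign_mul_self]
  have hcross := hH.two_mul_dotProduct_mulVec_le s x
  have hs_quad := dotProduct_mulVec_self_le_sum_of_posSemidef_diagonal_sub hl hdom hs
  have hx_quad := dotProduct_mulVec_self_le_sum_of_posSemidef_diagonal_sub hl hdom hx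
  linarith

end Matrix

open Matrix in
theorem normInftyOne_le_sum {d : ℕ} {H : Matrix (Fin d) (Fin d) ℝ} (hH : H.PosSemidef)
    {l : Fin d → ℝ} (hl : ∀ i, 0 ≤ l i) (hdom : (diagonal l - H).PosSemidef) :
    normInftyOne H ≤ ∑ i, l i :=
  Real.sSup_le (by
    rintro _ ⟨x, hx, rfl⟩
    exact sum_abs_mulVec_le_sum_of_posSemidef_diagonal_sub hH hl hdom hx)
    (Finset.sum_nonneg fun i _ => hl i)

/-- If `H` is symmetric positive semi-definite and `diag l - H` is positive semi-definite
with `l i ≥ 0`, then `‖H‖_{∞,1} ≤ ∑ i, l i`; in particular `‖H‖_{∞,1} ≤ L_sep(H)`. -/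
theorem normInftyOne_le_sum_diag_bound {d : ℕ}
    (H : Matrix (Fin d) (Fin d) ℝ) (hpsd : H.PosSemidef)
    (l : Fin d → ℝ) (hl : ∀ i, 0 ≤ l i)
    (hdom : (Matrix.diagonal l - H).PosSemidef) :
    normInftyOne H ≤ ∑ i, l i ∧ normInftyOne H ≤ Lsep H := by
  refine ⟨normInftyOne_le_sum hpsd hl hdom, le_csInf ⟨_, l, hl, hdom, rfl⟩ ?_⟩
  rintro _ ⟨l', hl', hdom', rfl⟩
  exact normInftyOne_le_sum hpsd hl' hdom'
end

section
/- Let H ∈ ℝ^{d×d} be nonzero, symmetric positive semi-definite, and let B_1, …, B_b be a partition of {1, …, d}. Define ‖x‖^B_∞ := max_k ‖x_{B_k}‖_2 and ‖x‖^B_1 := Σ_k ‖x_{B_k}‖_2, where x_{B_k} is the subvector of x on the index set B_k. Then ‖H‖^B_{∞,1} := max_{‖x‖^B_∞ ≤ 1} ‖H x‖^B_1 ≤ (ρ^B_diag(H))^{-1} Σ_k λ_max(H_{B_k B_k}), where H_{B_k B_l} is the submatrix of H with rows in B_k and columns in B_l, λ_max denotes the largest eigenvalue, and ρ^B_diag(H)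 := (Σ_k ‖H_{B_k B_k}‖_2) / (Σ_{k,l} ‖H_{B_k B_l}‖_2) with ‖·‖_2 the spectral norm. -/
/-! Block row `k` of `H x` is `∑_l H_{B_k B_l} x_{B_l}`, so the triangle inequality gives
`‖H‖^B_{∞,1} ≤ ∑_{k,l} ‖H_{B_k B_l}‖₂ = (ρ^B_diag(H))⁻¹ ∑_k ‖H_{B_k B_k}‖₂`, and the spectral norm
of a positive semidefinite diagonal block is its largest eigenvalue. The division is harmless
because a nonzero positive semidefinite matrix has a nonzero diagonal entry, hence a nonzero
diagonal block. -/

open scoped BigOperators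

/-- The spectral norm of a rectangular real matrix,
`‖M‖₂ = sup_{‖x‖₂ ≤ 1} ‖M x‖₂`. -/
noncomputable def specNorm {m n : Type*} [Fintype m] [Fintype n] (M : Matrix m n ℝ) : ℝ :=
  sSup ((fun x : n → ℝ => Real.sqrt (∑ i, (M.mulVec x) i ^ 2)) '' {x | ∑ j, x j ^ 2 ≤ 1})

/-- Given a block structure `P : Fin d → Fin b` (coordinate `i` belongs to block `P i`),
the block matrix norm `‖H‖^B_{∞,1} = max_{‖x‖^B_∞ ≤ 1} ‖H x‖^B_1`, where
`‖x‖^B_∞ = max_k ‖x_{B_k}‖₂` and `‖x‖^B_1 = ∑_k ‖x_{B_k}‖₂`. -/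
noncomputable def blockNormInftyOne {d b : ℕ} (P : Fin d → Fin b)
    (H : Matrix (Fin d) (Fin d) ℝ) : ℝ :=
  sSup ((fun x : Fin d → ℝ =>
      ∑ k, Real.sqrt (∑ i ∈ Finset.univ.filter (fun i => P i = k), (H.mulVec x) i ^ 2)) ''
    {x | ∀ k, Real.sqrt (∑ i ∈ Finset.univ.filter (fun i => P i = k), x i ^ 2) ≤ 1})

/-- The block diagonal concentration
`ρ^B_diag(H) = (∑_k ‖H_{B_k B_k}‖₂) / (∑_{k,l} ‖H_{B_k B_l}‖₂)`. -/
noncomputable def rhoBlockDiag {d b : ℕ} (P : Fin d → Fin b)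
    (H : Matrix (Fin d) (Fin d) ℝ) : ℝ :=
  (∑ k, specNorm (H.submatrix (Subtype.val : {i // P i = k} → Fin d)
      (Subtype.val : {i // P i = k} → Fin d))) /
  (∑ k, ∑ l, specNorm (H.submatrix (Subtype.val : {i // P i = k} → Fin d)
      (Subtype.val : {i // P i = l} → Fin d)))

open Matrix
open scoped Matrix.Norms.L2Operator ComplexOrder

namespace Matrix

theorem specNorm_eq_l2_opNorm {m n : Type*} [Fintype m] [Fintype n] [DecidableEq n]
    (M : Matrix m n ℝ) : specNorm M = ‖M‖ := by
  have hball : {x : n → ℝ | ∑ j, x j ^ 2 ≤ 1} =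
      WithLp.ofLp '' Metric.closedBall (0 : EuclideanSpace ℝ n) 1 := by
    ext x
    refine ⟨fun hx => ⟨WithLp.toLp 2 x, ?_, rfl⟩, ?_⟩
    · simpa [EuclideanSpace.norm_eq] using hx
    · rintro ⟨y, hy, rfl⟩
      simpa [EuclideanSpace.norm_eq] using hy
  rw [l2_opNorm_def, ← ContinuousLinearMap.sSup_unitClosedBall_eq_norm, specNorm, hball,
    Set.image_image]
  congr 1
  ext y
  simp [EuclideanSpace.norm_eq]

abbrev blockSubmatrix {ι κ R : Type*} (P : ι → κ) (A : Matrix ι ι R) (k l : κ) :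
    Matrix {i // P i = k} {i // P i = l} R :=
  A.submatrix Subtype.val Subtype.val

section Spectral

variable {𝕜 n : Type*} [RCLike 𝕜] [Fintype n] [DecidableEq n] {A : Matrix n n 𝕜}

theorem IsHermitian.l2_opNorm_eq_norm_eigenvalues (hA : A.IsHermitian) :
    ‖A‖ = ‖hA.eigenvalues‖ := by
  conv_lhs => rw [hA.spectral_theorem, Unitary.conjStarAlgAut_apply]
  rw [← Unitary.coe_star, CStarRing.norm_mul_coe_unitary, CStarRing.norm_coe_unitary_mul,
    l2_opNorm_diagonal]
  simp [Pi.norm_def]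

theorem PosSemidef.l2_opNorm_eq_iSup_eigenvalues (hA : A.PosSemidef) :
    ‖A‖ = ⨆ j, hA.1.eigenvalues j := by
  rw [hA.1.l2_opNorm_eq_norm_eigenvalues]
  refine le_antisymm ?_ (Real.iSup_le (fun j => ?_) (norm_nonneg _))
  · refine (pi_norm_le_iff_of_nonneg (Real.iSup_nonneg hA.eigenvalues_nonneg)).2 fun j => ?_
    rw [Real.norm_of_nonneg (hA.eigenvalues_nonneg j)]
    exact le_ciSup (Set.finite_range _).bddAbove j
  · exact (le_abs_self _).trans (norm_le_pi_norm hA.1.eigenvalues j)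

theorem PosSemidef.sum_l2_opNorm_blockSubmatrix_diag_pos {κ : Type*} [Fintype κ] [DecidableEq κ]
    (hA : A.PosSemidef) (hA0 : A ≠ 0) (P : n → κ) :
    0 < ∑ k, ‖A.blockSubmatrix P k k‖ := by
  refine (Finset.sum_nonneg fun k _ => norm_nonneg _).lt_of_ne fun h => hA0 ?_
  have hblocks := (Finset.sum_eq_zero_iff_of_nonneg fun k _ => norm_nonneg _).1 h.symm
  refine hA.trace_eq_zero_iff.1 (Finset.sum_eq_zero fun i _ => ?_)
  have hii : A.blockSubmatrix P (P i) (P i) = 0 := norm_eq_zero.1 (hblocks _ (Finset.mem_univ _))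
  simpa using congr_fun₂ hii ⟨i, rfl⟩ ⟨i, rfl⟩

end Spectral

end Matrix

section Blocks

variable {ι κ : Type*} [Fintype ι] [DecidableEq κ] (P : ι → κ)

def blockVec (k : κ) (x : ι → ℝ) : EuclideanSpace ℝ {i // P i = k} :=
  WithLp.toLp 2 fun i => x i

theorem norm_blockVec (k : κ) (x : ι → ℝ) :
    ‖blockVec P k x‖ = Real.sqrt (∑ i ∈ Finset.univ.filter (fun i => P i = k), x i ^ 2) := by
  rw [EuclideanSpace.norm_eq, ← Finset.sum_subtype_eq_sum_filter, Finset.subtype_univ]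
  simp [blockVec]

theorem blockVec_mulVec [Fintype κ] (A : Matrix ι ι ℝ) (x : ι → ℝ) (k : κ) :
    blockVec P k (A *ᵥ x) = ∑ l, WithLp.toLp 2 (A.blockSubmatrix P k l *ᵥ fun j => x j) := by
  ext i
  simp only [blockVec, PiLp.toLp_apply, WithLp.ofLp_sum, Finset.sum_apply, mulVec, dotProduct,
    submatrix_apply]
  exact (Fintype.sum_fiberwise P _).symm

theorem norm_blockVec_mulVec_le [DecidableEq ι] [Fintype κ] (A : Matrix ι ι ℝ) (x : ι → ℝ)
    (k : κ) :
    ‖blockVec P k (A *ᵥ x)‖ ≤ ∑ l, ‖A.blockSubmatrix P k l‖ * ‖blockVec P l x‖ := by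
  rw [blockVec_mulVec]
  refine (norm_sum_le _ _).trans (Finset.sum_le_sum fun l _ => ?_)
  exact l2_opNorm_mulVec _ (blockVec P l x)

end Blocks

theorem blockNormInftyOne_le_sum_l2_opNorm_blockSubmatrix {d b : ℕ} (P : Fin d → Fin b)
    (H : Matrix (Fin d) (Fin d) ℝ) :
    blockNormInftyOne P H ≤ ∑ k, ∑ l, ‖H.blockSubmatrix P k l‖ := by
  refine Real.sSup_le ?_ (Finset.sum_nonneg fun k _ => Finset.sum_nonneg fun l _ => norm_nonneg _)
  rintro _ ⟨x, hx, rfl⟩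
  refine Finset.sum_le_sum fun k _ => ?_
  rw [← norm_blockVec]
  refine (norm_blockVec_mulVec_le P H x k).trans (Finset.sum_le_sum fun l _ => ?_)
  have hxl : ‖blockVec P l x‖ ≤ 1 := (norm_blockVec P l x).trans_le (hx l)
  exact mul_le_of_le_one_right (norm_nonneg _) hxl

theorem blockNormInftyOne_le_rhoBlockDiag_inv_mul_sum_lambdaMax_general {d b : ℕ}
    (H : Matrix (Fin d) (Fin d) ℝ) (hne : H ≠ 0) (hpsd : H.PosSemidef)
    (P : Fin d → Fin b) :
    blockNormInftyOne P H ≤ (rhoBlockDiag P H)⁻¹ *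
      ∑ k, ⨆ j, ((hpsd.submatrix (Subtype.val : {i // P i = k} → Fin d)).1.eigenvalues j) := by
  set S := ∑ k, ∑ l, ‖H.blockSubmatrix P k l‖
  set Sdiag := ∑ k, ‖H.blockSubmatrix P k k‖
  have hρ : rhoBlockDiag P H = Sdiag / S := by
    simp only [rhoBlockDiag, specNorm_eq_l2_opNorm, S, Sdiag]
  have hSdiag : 0 < Sdiag := hpsd.sum_l2_opNorm_blockSubmatrix_diag_pos hne P
  have hS : 0 ≤ S := Finset.sum_nonneg fun k _ => Finset.sum_nonneg fun l _ => norm_nonneg _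
  rw [hρ, inv_div]
  calc blockNormInftyOne P H ≤ S := blockNormInftyOne_le_sum_l2_opNorm_blockSubmatrix P H
    _ = S / Sdiag * Sdiag := (div_mul_cancel₀ _ hSdiag.ne').symm
    _ ≤ _ := mul_le_mul_of_nonneg_left (Finset.sum_le_sum fun k _ =>
        (hpsd.submatrix _).l2_opNorm_eq_iSup_eigenvalues.le) (div_nonneg hS hSdiag.le)

/-- For a nonzero positive semi-definite `H` and a partition of the coordinates into
blocks (given by a surjective `P : Fin d → Fin b`),
`‖H‖^B_{∞,1} ≤ (ρ^B_diag(H))⁻¹ * ∑_k λ_max(H_{B_k B_k})`. -/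
theorem blockNormInftyOne_le_rhoBlockDiag_inv_mul_sum_lambdaMax {d b : ℕ}
    (H : Matrix (Fin d) (Fin d) ℝ) (hne : H ≠ 0) (hpsd : H.PosSemidef)
    (P : Fin d → Fin b) (hP : Function.Surjective P) :
    blockNormInftyOne P H ≤ (rhoBlockDiag P H)⁻¹ *
      ∑ k, ⨆ j, ((hpsd.submatrix (Subtype.val : {i // P i = k} → Fin d)).1.eigenvalues j) :=
  blockNormInftyOne_le_rhoBlockDiag_inv_mul_sum_lambdaMax_general H hne hpsd P
end
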